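/- Let A ⋊_α^σ G be a category crossed product such that each A_e is commutative, every morphism of G is an endomorphism (G is a disjoint union of monoids G_e), each G_e is abelian, and α is symmetric. Then the commutant of A in A ⋊_α^σ G is itself a commutative subring; hence it is the unique maximal commutative subalgebra of A ⋊_α^σ G containing A. -/

import Mathlib

open CategoryTheory

/-- The type of morphisms of a category `G`, bundled with domain and codomain. -/
abbrev CMor (G : Type*) [Category G] := Σ e f : G, e ⟶ f

/-- Transport along an equality of objects, as a ring homomorphism. -/
def castRH {G : Type*} (A : G → Type*) [∀ e, Ring (A e)]
    {e f : G} (h : e = f) : A e →+* A f := by subst h; exact RingHom.id _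

/-- The carrier of the category crossed product `A ⋊_α^σ G`: finitely supported
formal sums `Σ_s a_s u_s` with `a_s ∈ A_{c(s)}`. -/
abbrev CP {G : Type*} [Category G] (A : G → Type*) [∀ e, Ring (A e)] :=
  Π₀ p : CMor G, A p.2.1

open Classical in
/-- The multiplication of the category crossed product:
`(a u_s)(b u_t) = a σ_s(b) α(s,t) u_{st}` when `d(s) = c(t)`, else `0`. -/
noncomputable def catMul {G : Type*} [Category G] {A : G → Type*} [∀ e, Ring (A e)]
    (σ : ∀ e f : G, (e ⟶ f) → (A e →+* A f))
    (α : ∀ e f g : G, (f ⟶ g) → (e ⟶ f) → A g)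
    (x y : CP A) : CP A :=
  x.sum fun p a => y.sum fun q b =>
    if h : q.2.1 = p.1 then
      DFinsupp.single (⟨q.1, p.2.1, (q.2.2 ≫ eqToHom h) ≫ p.2.2⟩ : CMor G)
        (a * σ p.1 p.2.1 p.2.2 (castRH A h b) * α q.1 p.1 p.2.1 p.2.2 (q.2.2 ≫ eqToHom h))
    else 0

open Classical in
/-- `a u_s`, the formal sum supported on a single morphism. -/
noncomputable def catSingle {G : Type*} [Category G] {A : G → Type*} [∀ e, Ring (A e)]
    (p : CMor G) (a : A p.2.1) : CP A := DFinsupp.single p a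



/-!
For `x` in the commutant, comparing the `u_s`-coefficients of `x · a u_{1_e}` and `a u_{1_e} · x`
gives `x_s σ_s(a) = a x_s` for every `s : e ⟶ e`. As all morphisms are endomorphisms, `xy` and
`yx` are sums of monomial products `x_s u_s · y_t u_t` with `s, t` in one monoid `G_e` (the other
products vanish), and the relation turns `x_s σ_s(y_t) α(s,t) u_{st}` into `y_t x_s α(s,t) u_{st}`,
the matching term `y_t σ_t(x_s) α(t,s) u_{ts}` of `yx` since `A_e` is commutative, `G_e` is abelian
and `α` is symmetric.
-/

@[simp] lemma castRH_rfl {G : Type*} (A : G → Type*) [∀ e, Ring (A e)] (e : G) :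
    castRH A (rfl : e = e) = RingHom.id (A e) := rfl

section CrossedProduct

open Classical

variable {G : Type*} [Category G] {A : G → Type*} [∀ e, Ring (A e)]
  (σ : ∀ e f : G, (e ⟶ f) → (A e →+* A f)) (α : ∀ e f g : G, (f ⟶ g) → (e ⟶ f) → A g)

@[simp] lemma catSingle_zero (p : CMor G) : catSingle (A := A) p 0 = 0 :=
  DFinsupp.single_zero p

@[simp] lemma catMul_zero (x : CP A) : catMul σ α x 0 = 0 := by
  simp [catMul, DFinsupp.sum_zero_index]

@[simp] lemma zero_catMul (y : CP A) : catMul σ α 0 y = 0 := by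
  simp [catMul, DFinsupp.sum_zero_index]

lemma catMul_catSingle_catSingle (p q : CMor G) (a : A p.2.1) (b : A q.2.1) :
    catMul σ α (catSingle p a) (catSingle q b) =
      if h : q.2.1 = p.1 then
        catSingle ⟨q.1, p.2.1, (q.2.2 ≫ eqToHom h) ≫ p.2.2⟩
          (a * σ p.1 p.2.1 p.2.2 (castRH A h b) * α q.1 p.1 p.2.1 p.2.2 (q.2.2 ≫ eqToHom h))
      else 0 := by
  unfold catMul catSingle
  rw [DFinsupp.sum_single_index, DFinsupp.sum_single_index]
  · split <;> simp
  · rw [DFinsupp.sum_single_index] <;> split <;> simp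

lemma catMul_eq_sum (x y : CP A) :
    catMul σ α x y =
      x.sum fun p a => y.sum fun q b => catMul σ α (catSingle p a) (catSingle q b) := by
  simp only [catMul_catSingle_catSingle]
  rfl

lemma catMul_catSingle (x : CP A) (q : CMor G) (b : A q.2.1) :
    catMul σ α x (catSingle q b) = x.sum fun p a => catMul σ α (catSingle p a) (catSingle q b) := by
  rw [catMul_eq_sum]
  exact Finset.sum_congr rfl fun p _ => DFinsupp.sum_single_index (by simp)

lemma catSingle_catMul (p : CMor G) (a : A p.2.1) (y : CP A) :
    catMul σ α (catSingle p a) y = y.sum fun q b => catMul σ α (catSingle p a) (catSingle q b) := by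
  rw [catMul_eq_sum]
  exact DFinsupp.sum_single_index (by simp)

lemma catSingle_catMul_catSingle_of_ne {p q : CMor G} (h : q.2.1 ≠ p.1) (a : A p.2.1)
    (b : A q.2.1) : catMul σ α (catSingle p a) (catSingle q b) = 0 := by
  rw [catMul_catSingle_catSingle, dif_neg h]

lemma catSingle_catMul_catSingle_endo {e : G} (s t : e ⟶ e) (a b : A e) :
    catMul σ α (catSingle ⟨e, e, s⟩ a) (catSingle ⟨e, e, t⟩ b) =
      catSingle ⟨e, e, t ≫ s⟩ (a * σ e e s b * α e e e s t) := by
  rw [catMul_catSingle_catSingle, dif_pos rfl, eqToHom_refl, Category.comp_id, castRH_rfl,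
    RingHom.id_apply]

def MemCommutant (x : CP A) : Prop :=
  ∀ (e : G) (a : A e),
    catMul σ α x (catSingle ⟨e, e, 𝟙 e⟩ a) = catMul σ α (catSingle ⟨e, e, 𝟙 e⟩ a) x

lemma catMul_catSingle_id_apply (hα1r : ∀ (e f : G) (s : e ⟶ f), α e e f s (𝟙 e) = 1)
    (hendo : ∀ (e f : G), (e ⟶ f) → e = f) (x : CP A) {e : G} (s : e ⟶ e) (a : A e) :
    catMul σ α x (catSingle ⟨e, e, 𝟙 e⟩ a) ⟨e, e, s⟩ = x ⟨e, e, s⟩ * σ e e s a := by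
  rw [catMul_catSingle, DFinsupp.sum_apply, DFinsupp.sum, Finset.sum_eq_single ⟨e, e, s⟩]
  · rw [catSingle_catMul_catSingle_endo, hα1r, Category.id_comp, mul_one]
    exact DFinsupp.single_eq_same
  · rintro ⟨f, f', t⟩ - hne
    obtain rfl := hendo f f' t
    by_cases hfe : f = e
    · subst hfe
      rw [catSingle_catMul_catSingle_endo, Category.id_comp]
      exact DFinsupp.single_eq_of_ne (Ne.symm hne)
    · rw [catSingle_catMul_catSingle_of_ne σ α (Ne.symm hfe)]
      rfl
  · intro hx
    rw [DFinsupp.notMem_support_iff.1 hx, catSingle_zero, zero_catMul]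
    rfl

lemma catSingle_id_catMul_apply (hσ1 : ∀ e : G, σ e e (𝟙 e) = RingHom.id (A e))
    (hα1l : ∀ (e f : G) (s : e ⟶ f), α e f f (𝟙 f) s = 1)
    (hendo : ∀ (e f : G), (e ⟶ f) → e = f) (x : CP A) {e : G} (s : e ⟶ e) (a : A e) :
    catMul σ α (catSingle ⟨e, e, 𝟙 e⟩ a) x ⟨e, e, s⟩ = a * x ⟨e, e, s⟩ := by
  rw [catSingle_catMul, DFinsupp.sum_apply, DFinsupp.sum, Finset.sum_eq_single ⟨e, e, s⟩]
  · rw [catSingle_catMul_catSingle_endo, hσ1, hα1l, Category.comp_id, mul_one]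
    exact DFinsupp.single_eq_same
  · rintro ⟨f, f', t⟩ - hne
    obtain rfl := hendo f f' t
    by_cases hfe : f = e
    · subst hfe
      rw [catSingle_catMul_catSingle_endo, Category.comp_id]
      exact DFinsupp.single_eq_of_ne (Ne.symm hne)
    · rw [catSingle_catMul_catSingle_of_ne σ α hfe]
      rfl
  · intro hx
    rw [DFinsupp.notMem_support_iff.1 hx, catSingle_zero, catMul_zero]
    rfl

variable {σ α} in
lemma MemCommutant.apply_mul_σ (hσ1 : ∀ e : G, σ e e (𝟙 e) = RingHom.id (A e))
    (hα1r : ∀ (e f : G) (s : e ⟶ f), α e e f s (𝟙 e) = 1)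
    (hα1l : ∀ (e f : G) (s : e ⟶ f), α e f f (𝟙 f) s = 1)
    (hendo : ∀ (e f : G), (e ⟶ f) → e = f) {x : CP A} (hx : MemCommutant σ α x)
    {e : G} (s : e ⟶ e) (b : A e) : x ⟨e, e, s⟩ * σ e e s b = b * x ⟨e, e, s⟩ := by
  have h := DFunLike.congr_fun (hx e b) ⟨e, e, s⟩
  rwa [catMul_catSingle_id_apply σ α hα1r hendo,
    catSingle_id_catMul_apply σ α hσ1 hα1l hendo] at h

end CrossedProduct

lemma catSingle_catMul_catSingle_comm {G : Type*} [Category G] {A : G → Type*}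
    [∀ e, CommRing (A e)]
    (σ : ∀ e f : G, (e ⟶ f) → (A e →+* A f)) (α : ∀ e f g : G, (f ⟶ g) → (e ⟶ f) → A g)
    {e : G} {s t : e ⟶ e} (hst : t ≫ s = s ≫ t) (hα : α e e e s t = α e e e t s) {a b : A e}
    (ha : ∀ c, a * σ e e s c = c * a) (hb : ∀ c, b * σ e e t c = c * b) :
    catMul σ α (catSingle ⟨e, e, s⟩ a) (catSingle ⟨e, e, t⟩ b) =
      catMul σ α (catSingle ⟨e, e, t⟩ b) (catSingle ⟨e, e, s⟩ a) := by
  rw [catSingle_catMul_catSingle_endo, catSingle_catMul_catSingle_endo, ha, hb, hst, hα,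
    mul_comm b a]

theorem commutant_is_commutative_general
    {G : Type*} [CategoryTheory.Category G] {A : G → Type*} [∀ e, CommRing (A e)]
    (σ : ∀ e f : G, (e ⟶ f) → (A e →+* A f))
    (α : ∀ e f g : G, (f ⟶ g) → (e ⟶ f) → A g)
    (hσ1 : ∀ e : G, σ e e (𝟙 e) = RingHom.id (A e))
    (hα1r : ∀ (e f : G) (s : e ⟶ f), α e e f s (𝟙 e) = 1)
    (hα1l : ∀ (e f : G) (s : e ⟶ f), α e f f (𝟙 f) s = 1)
    (hendo : ∀ (e f : G), (e ⟶ f) → e = f)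
    (habel : ∀ (e : G) (s t : e ⟶ e), s ≫ t = t ≫ s)
    (hsym : ∀ (e : G) (s t : e ⟶ e), α e e e s t = α e e e t s) :
    ∀ x y : CP A,
      (∀ (e : G) (a : A e),
        catMul σ α x (catSingle (A := A) ⟨e, e, 𝟙 e⟩ a)
          = catMul σ α (catSingle (A := A) ⟨e, e, 𝟙 e⟩ a) x) →
      (∀ (e : G) (a : A e),
        catMul σ α y (catSingle (A := A) ⟨e, e, 𝟙 e⟩ a)
          = catMul σ α (catSingle (A := A) ⟨e, e, 𝟙 e⟩ a) y) →
      catMul σ α x y = catMul σ α y x := by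
  classical
  intro x y hx hy
  rw [catMul_eq_sum, catMul_eq_sum σ α y, DFinsupp.sum_comm]
  refine Finset.sum_congr rfl fun q _ => Finset.sum_congr rfl fun p _ => ?_
  beta_reduce
  obtain ⟨e, e', s⟩ := p
  obtain rfl := hendo e e' s
  obtain ⟨f, f', t⟩ := q
  obtain rfl := hendo f f' t
  by_cases hfe : f = e
  · subst hfe
    exact catSingle_catMul_catSingle_comm σ α (habel f t s) (hsym f s t)
      (MemCommutant.apply_mul_σ hσ1 hα1r hα1l hendo hx s)
      (MemCommutant.apply_mul_σ hσ1 hα1r hα1l hendo hy t)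
  · rw [catSingle_catMul_catSingle_of_ne σ α hfe,
      catSingle_catMul_catSingle_of_ne σ α (Ne.symm hfe)]

/-- if each `A_e` is commutative, every morphism of `G` is an
endomorphism, each `G_e` is abelian and `α` is symmetric, then the commutant
of `A` in `A ⋊_α^σ G` is commutative; hence it is the unique maximal
commutative subalgebra of `A ⋊_α^σ G` containing `A`. -/
theorem commutant_is_commutative
    {G : Type*} [CategoryTheory.Category G] {A : G → Type*} [∀ e, CommRing (A e)]
    (σ : ∀ e f : G, (e ⟶ f) → (A e →+* A f))
    (α : ∀ e f g : G, (f ⟶ g) → (e ⟶ f) → A g)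
    (hσ1 : ∀ e : G, σ e e (𝟙 e) = RingHom.id (A e))
    (hα1r : ∀ (e f : G) (s : e ⟶ f), α e e f s (𝟙 e) = 1)
    (hα1l : ∀ (e f : G) (s : e ⟶ f), α e f f (𝟙 f) s = 1)
    (hcoc : ∀ (e f g h : G) (s : g ⟶ h) (t : f ⟶ g) (r : e ⟶ f),
      α f g h s t * α e f h (t ≫ s) r = σ g h s (α e f g t r) * α e g h s (r ≫ t))
    (htw : ∀ (e f g : G) (s : f ⟶ g) (t : e ⟶ f) (a : A e),
      σ f g s (σ e f t a) * α e f g s t = α e f g s t * σ e g (t ≫ s) a)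
    (hendo : ∀ (e f : G), (e ⟶ f) → e = f)
    (habel : ∀ (e : G) (s t : e ⟶ e), s ≫ t = t ≫ s)
    (hsym : ∀ (e : G) (s t : e ⟶ e), α e e e s t = α e e e t s) :
    ∀ x y : CP A,
      (∀ (e : G) (a : A e),
        catMul σ α x (catSingle (A := A) ⟨e, e, 𝟙 e⟩ a)
          = catMul σ α (catSingle (A := A) ⟨e, e, 𝟙 e⟩ a) x) →
      (∀ (e : G) (a : A e),
        catMul σ α y (catSingle (A := A) ⟨e, e, 𝟙 e⟩ a)
          = catMul σ α (catSingle (A := A) ⟨e, e, 𝟙 e⟩ a) y) →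
      catMul σ α x y = catMul σ α y x :=
  commutant_is_commutative_general σ α hσ1 hα1r hα1l hendo habel hsym
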